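/- arXiv:2510.10800 — 3 statements merged into one kernel-verified Lean document; each statement's English description precedes it below -/
import Mathlib

section
/- Let {Π_x}_{x∈X} and {Q_y}_{y∈Y} be two projective instruments (mutually orthogonal nonzero projections summing to identity). Suppose their total verifier sets coincide: ∪_x V(Π_x) = ∪_y V(Q_y), where V(P) = {ρ density operator : Tr(PρP) = 1}. Then for every x there exists a unique y with V(Π_x) = V(Q_y), and this correspondence is a bijection between X and Y with Π_x = Q_{y(x)}. -/
/-! For an orthogonal projection `P`, the map `ρ ↦ Tr(PρP)` is real-linear and bounded by `1` on
density matrices, so the verifier set `V(P)` is a face of the convex set of states. It is convex,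
nonempty (it contains `P / Tr P`), and orthogonal projections `P, Q` have disjoint verifier sets:
a common verifier `ρ` would give `Tr((P + Q)ρ(P + Q)) = 2`, while `P + Q` is again a projection.
A convex set covered by pairwise disjoint faces lies in one of them (the midpoint of two of its
points lies in some face, which then contains both), so two such families with the same union
match up bijectively. Finally `P / Tr P ∈ V(Q)` forces `(1 - Q)P = 0`,
so equal verifier sets come from equal projections. -/

open Function

section ConvexFaces

variable {𝕜 E ι κ : Type*} [Field 𝕜] [LinearOrder 𝕜] [AddCommGroup E] [Module 𝕜 E] {A : Set E}

theorem Pairwise.eq_of_mem_of_mem {α : Type*} {W : ι → Set α} (h : Pairwise (Disjoint on W))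
    {a : α} {i j : ι} (hi : a ∈ W i) (hj : a ∈ W j) : i = j :=
  by_contra fun hij => Set.disjoint_left.1 (h hij) hi hj

theorem isExtreme_sep_eq_of_forall_le {F : Type*} [AddCommGroup F] [PartialOrder F]
    [IsOrderedAddMonoid F] [Module 𝕜 F] [PosSMulMono 𝕜 F] (φ : E →ₗ[𝕜] F) {c : F}
    (h : ∀ x ∈ A, φ x ≤ c) : IsExtreme 𝕜 A {x ∈ A | φ x = c} := by
  refine ⟨Set.sep_subset _ _, fun x₁ hx₁ x₂ hx₂ x ⟨_, hx⟩ ⟨a, b, ha, hb, hab, hab'⟩ => ⟨hx₁, ?_⟩⟩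
  have h₁ : a • φ x₁ ≤ a • c := smul_le_smul_of_nonneg_left (h x₁ hx₁) ha.le
  have h₂ : b • φ x₂ ≤ b • c := smul_le_smul_of_nonneg_left (h x₂ hx₂) hb.le
  have hsum : a • φ x₁ + b • φ x₂ = a • c + b • c := by
    rw [← add_smul, hab, one_smul, ← hx, ← hab', map_add, map_smul, map_smul]
  exact smul_right_injective F ha.ne' ((add_eq_add_iff_eq_and_eq h₁ h₂).1 hsum).1

variable (𝕜) in
structure IsConvexFaceFamily (A : Set E) (V : ι → Set E) : Prop where
  convex : ∀ i, Convex 𝕜 (V i)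
  isExtreme : ∀ i, IsExtreme 𝕜 A (V i)
  nonempty : ∀ i, (V i).Nonempty
  pairwise_disjoint : Pairwise (Disjoint on V)

variable [IsStrictOrderedRing 𝕜]

theorem Convex.exists_subset_of_subset_iUnion_isExtreme {C : Set E} {W : ι → Set E}
    (hC : Convex 𝕜 C) (hCA : C ⊆ A) (hW : ∀ i, IsExtreme 𝕜 A (W i))
    (hWd : Pairwise (Disjoint on W)) (hCW : C ⊆ ⋃ i, W i) (hCn : C.Nonempty) :
    ∃ i, C ⊆ W i := by
  obtain ⟨x, hx⟩ := hCn
  obtain ⟨i, hxi⟩ := Set.mem_iUnion.1 (hCW hx)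
  refine ⟨i, fun y hy => ?_⟩
  have hm : (1 / 2 : 𝕜) • y + (1 / 2 : 𝕜) • x ∈ C :=
    hC hy hx (by norm_num) (by norm_num) (by norm_num)
  obtain ⟨j, hmj⟩ := Set.mem_iUnion.1 (hCW hm)
  have hseg : (1 / 2 : 𝕜) • y + (1 / 2 : 𝕜) • x ∈ openSegment 𝕜 y x :=
    ⟨1 / 2, 1 / 2, by norm_num, by norm_num, by norm_num, rfl⟩
  have hyj := (hW j).left_mem_of_mem_openSegment (hCA hy) (hCA hx) hmj hseg
  have hxj := (hW j).right_mem_of_mem_openSegment (hCA hy) (hCA hx) hmj hseg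
  rwa [hWd.eq_of_mem_of_mem hxi hxj]

namespace IsConvexFaceFamily

variable {V : ι → Set E} {W : κ → Set E}

theorem exists_subset (hV : IsConvexFaceFamily 𝕜 A V) (hW : IsConvexFaceFamily 𝕜 A W)
    (hVW : ⋃ i, V i = ⋃ j, W j) (i : ι) : ∃ j, V i ⊆ W j :=
  (hV.convex i).exists_subset_of_subset_iUnion_isExtreme (hV.isExtreme i).subset hW.isExtreme
    hW.pairwise_disjoint (hVW ▸ Set.subset_iUnion V i) (hV.nonempty i)

theorem existsUnique_eq (hV : IsConvexFaceFamily 𝕜 A V) (hW : IsConvexFaceFamily 𝕜 A W)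
    (hVW : ⋃ i, V i = ⋃ j, W j) (i : ι) : ∃! j, V i = W j := by
  obtain ⟨j, hij⟩ := hV.exists_subset hW hVW i
  obtain ⟨i', hji'⟩ := hW.exists_subset hV hVW.symm j
  obtain ⟨x, hx⟩ := hV.nonempty i
  obtain rfl : i = i' := hV.pairwise_disjoint.eq_of_mem_of_mem hx (hji' (hij hx))
  refine ⟨j, hij.antisymm hji', fun j' hj' => ?_⟩
  exact hW.pairwise_disjoint.eq_of_mem_of_mem (hj' ▸ hx) (hij hx)

theorem exists_equiv (hV : IsConvexFaceFamily 𝕜 A V) (hW : IsConvexFaceFamily 𝕜 A W)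
    (hVW : ⋃ i, V i = ⋃ j, W j) : ∃ e : ι ≃ κ, ∀ i, V i = W (e i) := by
  choose f hf using fun i => (hV.existsUnique_eq hW hVW i).exists
  choose g hg using fun j => (hW.existsUnique_eq hV hVW.symm j).exists
  refine ⟨⟨f, g, fun i => ?_, fun j => ?_⟩, hf⟩
  · exact (hW.existsUnique_eq hV hVW.symm (f i)).unique (hg (f i)) (hf i).symm
  · exact (hV.existsUnique_eq hW hVW (g j)).unique (hf (g j)) (hg j).symm

end IsConvexFaceFamily

end ConvexFaces

namespace Matrix

open scoped ComplexOrder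

variable {𝕜 n : Type*} [RCLike 𝕜] [Fintype n] {P Q ρ : Matrix n n 𝕜}

def densityMatrices : Set (Matrix n n 𝕜) := {ρ | ρ.PosSemidef ∧ ρ.trace = 1}

def verifiers (P : Matrix n n 𝕜) : Set (Matrix n n 𝕜) :=
  {ρ | ρ.PosSemidef ∧ ρ.trace = 1 ∧ (P * ρ * P).trace = 1}

def traceConj (P : Matrix n n 𝕜) : Matrix n n 𝕜 →ₗ[ℝ] 𝕜 where
  toFun ρ := (P * ρ * P).trace
  map_add' _ _ := by simp only [mul_add, add_mul, trace_add]
  map_smul' _ _ := by simp only [mul_smul_comm, smul_mul_assoc, trace_smul, RingHom.id_apply]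

theorem verifiers_eq_sep (P : Matrix n n 𝕜) :
    verifiers P = {ρ ∈ densityMatrices | traceConj P ρ = 1} := by
  ext ρ
  simp only [verifiers, densityMatrices, traceConj, LinearMap.coe_mk, AddHom.coe_mk,
    Set.mem_ofPred_eq, and_assoc]

theorem convex_densityMatrices : Convex ℝ (densityMatrices : Set (Matrix n n 𝕜)) := by
  intro ρ hρ σ hσ a b ha hb hab
  refine ⟨(hρ.1.smul ha).add (hσ.1.smul hb), ?_⟩
  simp [trace_add, trace_smul, hρ.2, hσ.2, ← add_smul, hab]

theorem convex_verifiers (P : Matrix n n 𝕜) : Convex ℝ (verifiers P) := by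
  rw [verifiers_eq_sep]
  exact convex_densityMatrices.inter ((convex_singleton 1).linear_preimage (traceConj P))

theorem trace_one_sub_mul_mul_one_sub [DecidableEq n] (hP : IsIdempotentElem P)
    (ρ : Matrix n n 𝕜) :
    ((1 - P) * ρ * (1 - P)).trace = ρ.trace - (P * ρ * P).trace := by
  have h₁ : (P * ρ * P).trace = (P * ρ).trace := by
    rw [trace_mul_comm, ← Matrix.mul_assoc, hP.eq]
  have h₂ : (ρ * P).trace = (P * ρ).trace := trace_mul_comm _ _
  simp only [Matrix.sub_mul, Matrix.mul_sub, Matrix.one_mul, Matrix.mul_one, trace_sub, h₁, h₂]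
  ring

theorem trace_mul_mul_le_trace (hP : IsStarProjection P) (hρ : ρ.PosSemidef) :
    (P * ρ * P).trace ≤ ρ.trace := by
  classical
  have h := (hρ.mul_mul_conjTranspose_same (1 - P)).trace_nonneg
  rwa [hP.one_sub.isSelfAdjoint.isHermitian.eq, trace_one_sub_mul_mul_one_sub
    hP.isIdempotentElem, sub_nonneg] at h

theorem isExtreme_verifiers (hP : IsStarProjection P) :
    IsExtreme ℝ densityMatrices (verifiers P) := by
  rw [verifiers_eq_sep]
  exact isExtreme_sep_eq_of_forall_le _ fun ρ hρ => hρ.2 ▸ trace_mul_mul_le_trace hP hρ.1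

theorem trace_ne_zero_of_isStarProjection (hP : IsStarProjection P) (hP0 : P ≠ 0) :
    P.trace ≠ 0 := by
  have hPP : P * Pᴴ = P := by rw [hP.isSelfAdjoint.isHermitian.eq, hP.isIdempotentElem.eq]
  rwa [← hPP, ne_eq, trace_mul_conjTranspose_self_eq_zero_iff]

theorem inv_trace_smul_mem_verifiers (hP : IsStarProjection P) (hP0 : P ≠ 0) :
    P.trace⁻¹ • P ∈ verifiers P := by
  have htr := trace_ne_zero_of_isStarProjection hP hP0
  have hPpsd : P.PosSemidef := by
    have h := posSemidef_self_mul_conjTranspose P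
    rwa [hP.isSelfAdjoint.isHermitian.eq, hP.isIdempotentElem.eq] at h
  refine ⟨hPpsd.smul (inv_nonneg.2 hPpsd.trace_nonneg), ?_, ?_⟩
  · rw [trace_smul, smul_eq_mul, inv_mul_cancel₀ htr]
  · rw [mul_smul_comm, smul_mul_assoc, hP.isIdempotentElem.eq, hP.isIdempotentElem.eq,
      trace_smul, smul_eq_mul, inv_mul_cancel₀ htr]

theorem disjoint_verifiers (hP : IsStarProjection P) (hQ : IsStarProjection Q)
    (hPQ : P * Q = 0) :
    Disjoint (verifiers P) (verifiers Q) := by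
  refine Set.disjoint_left.2 fun ρ ⟨hρ, htr, hPρ⟩ ⟨_, _, hQρ⟩ => ?_
  have hQP : Q * P = 0 := by
    simpa [hP.isSelfAdjoint.star_eq, hQ.isSelfAdjoint.star_eq] using congrArg star hPQ
  have hPρQ : (P * ρ * Q).trace = 0 := by
    rw [trace_mul_comm, ← Matrix.mul_assoc, hQP, Matrix.zero_mul, trace_zero]
  have hQρP : (Q * ρ * P).trace = 0 := by
    rw [trace_mul_comm, ← Matrix.mul_assoc, hPQ, Matrix.zero_mul, trace_zero]
  have h := trace_mul_mul_le_trace (hP.add hQ hPQ) hρ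
  simp only [Matrix.add_mul, Matrix.mul_add, trace_add, hPρ, hQρ, hPρQ, hQρP, htr] at h
  norm_num at h

theorem mul_eq_of_verifiers_subset (hP : IsStarProjection P) (hP0 : P ≠ 0)
    (hQ : IsStarProjection Q) (h : verifiers P ⊆ verifiers Q) : Q * P = P := by
  classical
  obtain ⟨-, htr, hQtr⟩ := h (inv_trace_smul_mem_verifiers hP hP0)
  have hc : P.trace⁻¹ ≠ 0 := inv_ne_zero (trace_ne_zero_of_isStarProjection hP hP0)
  have h0 := trace_one_sub_mul_mul_one_sub hQ.isIdempotentElem (P.trace⁻¹ • P)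
  have hB : (1 - Q) * (P.trace⁻¹ • P) * (1 - Q) =
      P.trace⁻¹ • ((1 - Q) * P * ((1 - Q) * P)ᴴ) := by
    rw [conjTranspose_mul, hP.isSelfAdjoint.isHermitian.eq,
      hQ.one_sub.isSelfAdjoint.isHermitian.eq, Matrix.mul_assoc (1 - Q) P, ← Matrix.mul_assoc P,
      hP.isIdempotentElem.eq]
    simp only [mul_smul_comm, smul_mul_assoc, Matrix.mul_assoc]
  rw [htr, hQtr, sub_self, hB, trace_smul, smul_eq_mul, mul_eq_zero, or_iff_right hc,
    trace_mul_conjTranspose_self_eq_zero_iff, Matrix.sub_mul, Matrix.one_mul, sub_eq_zero] at h0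
  exact h0.symm

theorem eq_of_verifiers_eq (hP : IsStarProjection P) (hP0 : P ≠ 0) (hQ : IsStarProjection Q)
    (hQ0 : Q ≠ 0) (h : verifiers P = verifiers Q) : P = Q :=
  calc P = star (Q * P) := by
        rw [mul_eq_of_verifiers_subset hP hP0 hQ h.le, hP.isSelfAdjoint.star_eq]
    _ = P * Q := by rw [star_mul, hP.isSelfAdjoint.star_eq, hQ.isSelfAdjoint.star_eq]
    _ = Q := mul_eq_of_verifiers_subset hQ hQ0 hP h.ge

theorem isConvexFaceFamily_verifiers {ι : Type*} {P : ι → Matrix n n 𝕜}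
    (hP : ∀ i, IsStarProjection (P i)) (hPorth : ∀ i j, i ≠ j → P i * P j = 0)
    (hP0 : ∀ i, P i ≠ 0) : IsConvexFaceFamily ℝ densityMatrices fun i => verifiers (P i) where
  convex i := convex_verifiers (P i)
  isExtreme i := isExtreme_verifiers (hP i)
  nonempty i := ⟨_, inv_trace_smul_mem_verifiers (hP i) (hP0 i)⟩
  pairwise_disjoint i j hij := disjoint_verifiers (hP i) (hP j) (hPorth i j hij)

end Matrix

open Matrix ComplexOrder

theorem stmt_7_general {n X Y : Type*} [Fintype n]
    (P : X → Matrix n n ℂ) (Q : Y → Matrix n n ℂ)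
    (hPproj : ∀ x, P x * P x = P x ∧ (P x)ᴴ = P x)
    (hPorth : ∀ x x', x ≠ x' → P x * P x' = 0)
    (hPnz : ∀ x, P x ≠ 0)
    (hQproj : ∀ y, Q y * Q y = Q y ∧ (Q y)ᴴ = Q y)
    (hQorth : ∀ y y', y ≠ y' → Q y * Q y' = 0)
    (hQnz : ∀ y, Q y ≠ 0)
    (hunion : (⋃ x, {ρ : Matrix n n ℂ | ρ.PosSemidef ∧ ρ.trace = 1 ∧
        (P x * ρ * P x).trace = 1}) =
      (⋃ y, {ρ : Matrix n n ℂ | ρ.PosSemidef ∧ ρ.trace = 1 ∧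
        (Q y * ρ * Q y).trace = 1})) :
    (∀ x, ∃! y, {ρ : Matrix n n ℂ | ρ.PosSemidef ∧ ρ.trace = 1 ∧
        (P x * ρ * P x).trace = 1} =
      {ρ : Matrix n n ℂ | ρ.PosSemidef ∧ ρ.trace = 1 ∧
        (Q y * ρ * Q y).trace = 1}) ∧
    ∃ e : X ≃ Y, ∀ x, P x = Q (e x) := by
  have hP x : IsStarProjection (P x) := isStarProjection_iff'.2 (hPproj x)
  have hQ y : IsStarProjection (Q y) := isStarProjection_iff'.2 (hQproj y)
  have hV := isConvexFaceFamily_verifiers hP hPorth hPnz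
  have hW := isConvexFaceFamily_verifiers hQ hQorth hQnz
  obtain ⟨e, he⟩ := hV.exists_equiv hW hunion
  exact ⟨hV.existsUnique_eq hW hunion, e,
    fun x => eq_of_verifiers_eq (hP x) (hPnz x) (hQ (e x)) (hQnz (e x)) (he x)⟩

/-- If two projective instruments have the same total set of verifier states,
then their verifier sets match up outcome-by-outcome via a unique
correspondence, which is a bijection identifying the projections. -/
theorem stmt_7 {n X Y : Type*} [Fintype n] [DecidableEq n]
    [Fintype X] [DecidableEq X] [Fintype Y] [DecidableEq Y]
    (P : X → Matrix n n ℂ) (Q : Y → Matrix n n ℂ)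
    (hPproj : ∀ x, P x * P x = P x ∧ (P x)ᴴ = P x)
    (hPorth : ∀ x x', x ≠ x' → P x * P x' = 0)
    (hPsum : ∑ x, P x = 1)
    (hPnz : ∀ x, P x ≠ 0)
    (hQproj : ∀ y, Q y * Q y = Q y ∧ (Q y)ᴴ = Q y)
    (hQorth : ∀ y y', y ≠ y' → Q y * Q y' = 0)
    (hQsum : ∑ y, Q y = 1)
    (hQnz : ∀ y, Q y ≠ 0)
    (hunion : (⋃ x, {ρ : Matrix n n ℂ | ρ.PosSemidef ∧ ρ.trace = 1 ∧
        (P x * ρ * P x).trace = 1}) =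
      (⋃ y, {ρ : Matrix n n ℂ | ρ.PosSemidef ∧ ρ.trace = 1 ∧
        (Q y * ρ * Q y).trace = 1})) :
    (∀ x, ∃! y, {ρ : Matrix n n ℂ | ρ.PosSemidef ∧ ρ.trace = 1 ∧
        (P x * ρ * P x).trace = 1} =
      {ρ : Matrix n n ℂ | ρ.PosSemidef ∧ ρ.trace = 1 ∧
        (Q y * ρ * Q y).trace = 1}) ∧
    ∃ e : X ≃ Y, ∀ x, P x = Q (e x) :=
  stmt_7_general P Q hPproj hPorth hPnz hQproj hQorth hQnz hunion
end

section
/- Extremality of single-Kraus maps: if K : H → H is a linear operator and A, B are completely positive maps with A + B = (ρ ↦ KρK†), then A(ρ) = λKρK† and B(ρ) = (1−λ)KρK† for some λ ∈ [0,1]. -/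
/-!
Evaluating `A + B = (ρ ↦ KρKᴴ)` on the matrix units `Eᵢⱼ` shows that the Kraus operators
`M₁, …, M_p` of `A` and `B` together satisfy `∑ₖ Mₖ[a,i] conj Mₖ[b,j] = K[a,i] conj K[b,j]`,
i.e. the sum of their rank-one Choi matrices is the rank-one Choi matrix of `K`. This forces
every `Mₖ` onto the line through `K`, `Mₖ = cₖ K`, so `A` is `ρ ↦ KρKᴴ` scaled by the sum of `|cₖ|²`
over its Kraus operators, and likewise for `B`; evaluating at `ρ = 1` shows that the two weights
add up to `1` unless `K = 0`.
-/

open Matrix ComplexOrder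

section

variable {𝕜 ι : Type*} [RCLike 𝕜] [Fintype ι]

theorem RCLike.eq_zero_of_sum_mul_star_eq_zero {w : ι → 𝕜} (h : ∑ k, w k * star (w k) = 0)
    (k : ι) : w k = 0 := by
  simp only [RCLike.star_def, RCLike.mul_conj] at h
  norm_cast at h
  rw [Finset.sum_eq_zero_iff_of_nonneg fun _ _ => by positivity] at h
  simpa using h k (Finset.mem_univ k)

/-- The hypotheses make `∑ₖ |a yₖ - b xₖ|²` vanish (equality case of Cauchy–Schwarz). -/
theorem RCLike.mul_eq_mul_of_sum_mul_star {x y : ι → 𝕜} {a b : 𝕜}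
    (hx : ∑ k, x k * star (x k) = a * star a) (hy : ∑ k, y k * star (y k) = b * star b)
    (hxy : ∑ k, x k * star (y k) = a * star b) (k : ι) : a * y k = b * x k := by
  have hyx : ∑ k, y k * star (x k) = b * star a := by
    simpa [star_sum, mul_comm] using congrArg star hxy
  have hsq : ∑ k, (a * y k - b * x k) * star (a * y k - b * x k) = 0 := by
    calc ∑ k, (a * y k - b * x k) * star (a * y k - b * x k)
        = a * star a * ∑ k, y k * star (y k) - a * star b * ∑ k, y k * star (x k)
          - b * star a * ∑ k, x k * star (y k) + b * star b * ∑ k, x k * star (x k) := by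
          simp only [Finset.mul_sum, ← Finset.sum_sub_distrib, ← Finset.sum_add_distrib]
          refine Finset.sum_congr rfl fun k _ => ?_
          simp only [star_sub, star_mul']
          ring
      _ = 0 := by rw [hx, hy, hxy, hyx]; ring
  exact sub_eq_zero.mp (RCLike.eq_zero_of_sum_mul_star_eq_zero hsq k)

end

namespace Matrix

variable {𝕜 ι m n : Type*} [RCLike 𝕜] [Fintype ι]

theorem exists_eq_smul_of_sum_apply_mul_star {M : ι → Matrix m n 𝕜} {K : Matrix m n 𝕜}
    (h : ∀ a i b j, ∑ k, M k a i * star (M k b j) = K a i * star (K b j)) (k : ι) :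
    ∃ c : 𝕜, M k = c • K := by
  by_cases hK : K = 0
  · refine ⟨0, ?_⟩
    ext a i
    simpa [hK] using RCLike.eq_zero_of_sum_mul_star_eq_zero (w := fun k => M k a i)
      (by simpa [hK] using h a i a i) k
  · obtain ⟨a, i, hai⟩ : ∃ a i, K a i ≠ 0 := by
      by_contra! h0
      exact hK (Matrix.ext h0)
    refine ⟨M k a i / K a i, ?_⟩
    ext b j
    rw [smul_apply, smul_eq_mul, div_mul_eq_mul_div, eq_div_iff hai, mul_comm,
      RCLike.mul_eq_mul_of_sum_mul_star (h a i a i) (h b j b j) (h a i b j) k, mul_comm]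

variable [Fintype n]

def krausMap (M : ι → Matrix m n 𝕜) (ρ : Matrix n n 𝕜) : Matrix m m 𝕜 :=
  ∑ k, M k * ρ * (M k)ᴴ

theorem mul_single_one_mul_conjTranspose_apply [DecidableEq n] (M : Matrix m n 𝕜) (i j : n)
    (a b : m) : (M * single i j (1 : 𝕜) * Mᴴ) a b = M a i * star (M b j) := by
  simp [mul_apply, single, conjTranspose_apply, ite_and]

theorem krausMap_single_one_apply [DecidableEq n] (M : ι → Matrix m n 𝕜) (i j : n) (a b : m) :
    krausMap M (single i j (1 : 𝕜)) a b = ∑ k, M k a i * star (M k b j) := by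
  simp only [krausMap, sum_apply, mul_single_one_mul_conjTranspose_apply]

theorem krausMap_sumElim {κ : Type*} [Fintype κ] (M : ι → Matrix m n 𝕜) (N : κ → Matrix m n 𝕜)
    (ρ : Matrix n n 𝕜) : krausMap (Sum.elim M N) ρ = krausMap M ρ + krausMap N ρ :=
  Fintype.sum_sum_type _

theorem krausMap_eq_smul_of_eq_smul {M : ι → Matrix m n 𝕜} {K : Matrix m n 𝕜} {c : ι → 𝕜}
    (h : ∀ k, M k = c k • K) (ρ : Matrix n n 𝕜) :
    krausMap M ρ = ((∑ k, ‖c k‖ ^ 2 : ℝ) : 𝕜) • (K * ρ * Kᴴ) := by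
  simp only [krausMap, h, Matrix.smul_mul, Matrix.mul_smul, conjTranspose_smul, smul_smul,
    RCLike.star_def, RCLike.conj_mul, RCLike.ofReal_sum, RCLike.ofReal_pow, Finset.sum_smul]

theorem exists_krausMap_eq_smul_of_add_eq [DecidableEq n] {κ : Type*} [Fintype κ]
    {M : ι → Matrix m n 𝕜} {N : κ → Matrix m n 𝕜} {K : Matrix m n 𝕜}
    (h : ∀ ρ, krausMap M ρ + krausMap N ρ = K * ρ * Kᴴ) :
    ∃ t : ℝ, 0 ≤ t ∧ ∀ ρ, krausMap M ρ = (t : 𝕜) • (K * ρ * Kᴴ) := by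
  have hentry : ∀ a i b j, ∑ k, Sum.elim M N k a i * star (Sum.elim M N k b j)
      = K a i * star (K b j) := fun a i b j => by
    rw [← krausMap_single_one_apply, krausMap_sumElim, h, mul_single_one_mul_conjTranspose_apply]
  choose c hc using fun k => exists_eq_smul_of_sum_apply_mul_star hentry (Sum.inl k)
  exact ⟨_, by positivity, krausMap_eq_smul_of_eq_smul hc⟩

end Matrix

/-- Extremality of single-Kraus maps: if completely positive maps `A`, `B`
satisfy `A + B = (ρ ↦ KρKᴴ)`, then `A` and `B` are nonnegative multiples
`λ`, `1-λ` of that map with `λ ∈ [0,1]`. -/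
theorem stmt_15 {n : Type*} [Fintype n] [DecidableEq n]
    (K : Matrix n n ℂ)
    (A B : Matrix n n ℂ → Matrix n n ℂ)
    (hA : ∃ (m : ℕ) (M : Fin m → Matrix n n ℂ),
      ∀ ρ, A ρ = ∑ i, M i * ρ * (M i)ᴴ)
    (hB : ∃ (m : ℕ) (M : Fin m → Matrix n n ℂ),
      ∀ ρ, B ρ = ∑ i, M i * ρ * (M i)ᴴ)
    (hsum : ∀ ρ : Matrix n n ℂ, A ρ + B ρ = K * ρ * Kᴴ) :
    ∃ lam : ℝ, 0 ≤ lam ∧ lam ≤ 1 ∧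
      (∀ ρ : Matrix n n ℂ, A ρ = (lam : ℂ) • (K * ρ * Kᴴ)) ∧
      (∀ ρ : Matrix n n ℂ, B ρ = ((1 - lam : ℝ) : ℂ) • (K * ρ * Kᴴ)) := by
  obtain ⟨_, MA, hA : ∀ ρ, A ρ = krausMap MA ρ⟩ := hA
  obtain ⟨_, MB, hB : ∀ ρ, B ρ = krausMap MB ρ⟩ := hB
  simp only [hA, hB] at hsum ⊢
  obtain ⟨s, hs, hAs⟩ := exists_krausMap_eq_smul_of_add_eq hsum
  obtain ⟨t, ht, hBt⟩ := exists_krausMap_eq_smul_of_add_eq fun ρ => (add_comm _ _).trans (hsum ρ)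
  simp only [RCLike.ofReal_eq_complex_ofReal] at hAs hBt
  rcases eq_or_ne K 0 with rfl | hK
  · exact ⟨0, le_rfl, zero_le_one, fun ρ => by simp [hAs], fun ρ => by simp [hBt]⟩
  have hst : s + t = 1 := by
    have h1 := hsum 1
    rw [hAs, hBt, ← add_smul, mul_one, ← Complex.ofReal_add] at h1
    exact Complex.ofReal_eq_one.mp <| smul_left_injective ℂ
      (self_mul_conjTranspose_eq_zero.not.mpr hK) (h1.trans (one_smul ℂ _).symm)
  refine ⟨s, hs, by linarith, hAs, fun ρ => ?_⟩
  rw [hBt, ← hst, add_sub_cancel_left]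
end

section
/- If two POVMs {A_x}_{x∈X} and {B_y}_{y∈Y} on a finite-dimensional Hilbert space admit a joint POVM {C_{x,y}} with Σ_y C_{x,y} = A_x and Σ_x C_{x,y} = B_y, and all A_x, B_y are nonzero rank-one-proportional effects (atomic) with the families non-redundant (no two effects of the same POVM proportional), then |X| = |Y| and there is a bijection matching A_x = B_{y(x)}; i.e., compatible atomic non-redundant POVMs are equal up to relabeling. -/
open Matrix ComplexOrder
open scoped MatrixOrder

/-! If `0 ≤ C ≤ P` and `P` has rank at most one, then `C` vanishes on the kernel of `P`, so `C`
is a nonnegative multiple of `P`. Hence a nonzero entry `C x y` of a joint POVM lies on the ray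
of both `A x` and `B y`. Non-redundancy then forces every row and every column of `C` to have
exactly one nonzero entry, and summing that row and that column gives `A x = C x (e x) = B (e x)`
for the bijection `e` so obtained. -/

namespace Matrix

variable {n : Type*} [Fintype n] {C P : Matrix n n ℂ} {v : n → ℂ}

theorem mulVec_eq_zero_of_nonneg_of_le (hC : 0 ≤ C) (hCP : C ≤ P) {w : n → ℂ}
    (hw : P *ᵥ w = 0) : C *ᵥ w = 0 := by
  have h := (le_iff.mp hCP).dotProduct_mulVec_nonneg w
  rw [sub_mulVec, dotProduct_sub, hw, dotProduct_zero, zero_sub, neg_nonneg] at h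
  exact (hC.posSemidef.dotProduct_mulVec_zero_iff w).mp
    (le_antisymm h (hC.posSemidef.dotProduct_mulVec_nonneg w))

theorem IsHermitian.exists_mulVec_eq_zero_of_rank_le_one (hP : P.IsHermitian)
    (hr : P.rank ≤ 1) : ∃ v : n → ℂ, ∀ w, star v ⬝ᵥ w = 0 → P *ᵥ w = 0 := by
  obtain ⟨⟨v, _⟩, hv⟩ := (finrank_le_one_iff (V := LinearMap.range P.mulVecLin)).mp hr
  have hmul : ∀ u, ∃ c : ℂ, P *ᵥ u = c • v := fun u =>
    (hv ⟨P *ᵥ u, LinearMap.mem_range_self _ u⟩).imp fun c hc => congrArg Subtype.val hc.symm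
  refine ⟨v, fun w hw => ?_⟩
  obtain ⟨c, hc⟩ := hmul w
  obtain ⟨d, hd⟩ := hmul v
  -- `P w ∈ ℂ ∙ v`, while `⟪v, P w⟫ = ⟪P v, w⟫ = 0` because `P` is Hermitian.
  have h : c * (star v ⬝ᵥ v) = 0 := by
    rw [← smul_eq_mul, ← dotProduct_smul, ← hc, dotProduct_mulVec, ← hP.eq, ← star_mulVec, hd,
      star_smul, smul_dotProduct, hw, smul_zero]
  rcases mul_eq_zero.mp h with h | h
  · rw [hc, h, zero_smul]
  · rw [hc, dotProduct_star_self_eq_zero.mp h, smul_zero]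

theorem IsHermitian.eq_smul_vecMulVec_of_mulVec_eq_zero (hC : C.IsHermitian)
    (h : ∀ w, star v ⬝ᵥ w = 0 → C *ᵥ w = 0) :
    C = ((star v ⬝ᵥ C *ᵥ v) / (star v ⬝ᵥ v) ^ 2) • vecMulVec v (star v) := by
  rcases eq_or_ne v 0 with rfl | hv
  · rw [zero_vecMulVec, smul_zero, ext_iff_mulVec]
    exact fun w => (h w (by simp)).trans (zero_mulVec w).symm
  set ν := star v ⬝ᵥ v
  have hν : ν ≠ 0 := dotProduct_star_self_eq_zero.not.mpr hv
  -- the orthogonal projection onto `ℂ ∙ v`; `C = C Q = Q C` and then `C = Q C Q`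
  set Q := ν⁻¹ • vecMulVec v (star v)
  have hCQ : C * Q = C := by
    refine ext_iff_mulVec.mpr fun u => ?_
    rw [← mulVec_mulVec, ← sub_eq_zero, ← mulVec_sub]
    apply h
    simp only [Q, smul_mulVec, vecMulVec_mulVec, dotProduct_sub, dotProduct_smul]
    simp [ν, hν]
  have hQ : Qᴴ = Q := by
    rw [conjTranspose_smul, conjTranspose_vecMulVec, star_star, star_inv₀,
      (IsSelfAdjoint.of_nonneg (dotProduct_star_self_nonneg v)).star_eq]
  have hQC : Q * C = C := by
    simpa only [conjTranspose_mul, hC.eq, hQ] using congrArg (·ᴴ) hCQ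
  calc C = Q * C * Q := by rw [hQC, hCQ]
    _ = _ := by
      simp only [Q, smul_mul, Matrix.mul_smul, smul_smul, vecMulVec_mul, vecMul_vecMulVec,
        vecMulVec_smul, ← dotProduct_mulVec]
      congr 1
      ring

theorem PosSemidef.sameRay_vecMulVec_of_mulVec_eq_zero (hC : C.PosSemidef)
    (h : ∀ w, star v ⬝ᵥ w = 0 → C *ᵥ w = 0) : SameRay ℝ C (vecMulVec v (star v)) := by
  obtain ⟨μ, hμ, hμC⟩ := RCLike.nonneg_iff_exists_ofReal.mp (hC.dotProduct_mulVec_nonneg v)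
  obtain ⟨ν, -, hνv⟩ := RCLike.nonneg_iff_exists_ofReal.mp (dotProduct_star_self_nonneg v)
  rw [hC.isHermitian.eq_smul_vecMulVec_of_mulVec_eq_zero h, ← hμC, ← hνv, ← RCLike.ofReal_pow,
    ← RCLike.ofReal_div, ← RCLike.real_smul_eq_coe_smul]
  exact SameRay.sameRay_nonneg_smul_left _ (by positivity)

theorem sameRay_of_nonneg_of_le_of_rank_le_one (hC : 0 ≤ C) (hCP : C ≤ P) (hP : P.rank ≤ 1) :
    SameRay ℝ C P := by
  have hP' : P.PosSemidef := (hC.trans hCP).posSemidef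
  obtain ⟨v, hPv⟩ := hP'.isHermitian.exists_mulVec_eq_zero_of_rank_le_one hP
  have hCv : ∀ w, star v ⬝ᵥ w = 0 → C *ᵥ w = 0 := fun w hw =>
    mulVec_eq_zero_of_nonneg_of_le hC hCP (hPv w hw)
  refine (hC.posSemidef.sameRay_vecMulVec_of_mulVec_eq_zero hCv).trans
    (hP'.sameRay_vecMulVec_of_mulVec_eq_zero hPv).symm fun h0 => Or.inl ?_
  rw [hC.posSemidef.isHermitian.eq_smul_vecMulVec_of_mulVec_eq_zero hCv, h0, smul_zero]

end Matrix

theorem eq_of_sameRay_of_forall_ne_smul {ι E : Type*} [AddCommGroup E] [Module ℂ E] [Module ℝ E]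
    [IsScalarTower ℝ ℂ E] {F : ι → E} (hF : ∀ i, F i ≠ 0)
    (hnr : ∀ i j, i ≠ j → ∀ c : ℝ, 0 < c → F i ≠ (c : ℂ) • F j) {i j : ι}
    (h : SameRay ℝ (F i) (F j)) : i = j := by
  by_contra hij
  obtain ⟨c, hc, hcF⟩ := h.exists_pos_right (hF i) (hF j)
  exact hnr i j hij c hc (hcF.trans (RCLike.real_smul_eq_coe_smul (K := ℂ) c (F j)))

theorem exists_equiv_of_existsUnique {X Y : Type*} (R : X → Y → Prop) (hX : ∀ x, ∃! y, R x y)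
    (hY : ∀ y, ∃! x, R x y) : ∃ e : X ≃ Y, ∀ x y, R x y ↔ e x = y := by
  choose f hf hfu using hX
  have hR : ∀ x y, R x y ↔ f x = y := fun x y => ⟨fun h => (hfu x y h).symm, fun h => h ▸ hf x⟩
  have hbij : f.Bijective :=
    (Function.bijective_iff_existsUnique f).mpr fun y => by simpa only [hR] using hY y
  exact ⟨Equiv.ofBijective f hbij, hR⟩

theorem stmt_16_general {n X Y : Type*} [Fintype n]
    [Fintype X] [Fintype Y]
    (A : X → Matrix n n ℂ) (B : Y → Matrix n n ℂ)
    (hAatom : ∀ x, A x ≠ 0 ∧ (A x).rank ≤ 1)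
    (hBatom : ∀ y, B y ≠ 0 ∧ (B y).rank ≤ 1)
    (hAnr : ∀ x x', x ≠ x' → ∀ c : ℝ, 0 < c → A x ≠ (c : ℂ) • A x')
    (hBnr : ∀ y y', y ≠ y' → ∀ c : ℝ, 0 < c → B y ≠ (c : ℂ) • B y')
    (hcompat : ∃ C : X → Y → Matrix n n ℂ,
      (∀ x y, (C x y).PosSemidef) ∧
      (∀ x, ∑ y, C x y = A x) ∧
      (∀ y, ∑ x, C x y = B y)) :
    Fintype.card X = Fintype.card Y ∧ ∃ e : X ≃ Y, ∀ x, A x = B (e x) := by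
  obtain ⟨C, hC, hCA, hCB⟩ := hcompat
  have hC₀ : ∀ x y, 0 ≤ C x y := fun x y => (hC x y).nonneg
  have hray : ∀ x y, C x y ≠ 0 → SameRay ℝ (A x) (B y) := fun x y hxy =>
    have hA := sameRay_of_nonneg_of_le_of_rank_le_one (hC₀ x y)
      (hCA x ▸ Finset.single_le_sum (fun y _ => hC₀ x y) (Finset.mem_univ y)) (hAatom x).2
    have hB := sameRay_of_nonneg_of_le_of_rank_le_one (hC₀ x y)
      (hCB y ▸ Finset.single_le_sum (fun x _ => hC₀ x y) (Finset.mem_univ x)) (hBatom y).2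
    hA.symm.trans hB fun h => (hxy h).elim
  have hX : ∀ x, ∃! y, C x y ≠ 0 := fun x => by
    obtain ⟨y, -, hy⟩ := Finset.exists_ne_zero_of_sum_ne_zero ((hCA x).trans_ne (hAatom x).1)
    refine ⟨y, hy, fun y' hy' => eq_of_sameRay_of_forall_ne_smul (fun y => (hBatom y).1) hBnr ?_⟩
    exact (hray x y' hy').symm.trans (hray x y hy) fun h => ((hAatom x).1 h).elim
  have hY : ∀ y, ∃! x, C x y ≠ 0 := fun y => by
    obtain ⟨x, -, hx⟩ := Finset.exists_ne_zero_of_sum_ne_zero ((hCB y).trans_ne (hBatom y).1)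
    refine ⟨x, hx, fun x' hx' => eq_of_sameRay_of_forall_ne_smul (fun x => (hAatom x).1) hAnr ?_⟩
    exact (hray x' y hx').trans (hray x y hx).symm fun h => ((hBatom y).1 h).elim
  obtain ⟨e, he⟩ := exists_equiv_of_existsUnique _ hX hY
  refine ⟨Fintype.card_congr e, e, fun x => ?_⟩
  calc A x = C x (e x) := by
        rw [← hCA x]
        exact Finset.sum_eq_single_of_mem _ (Finset.mem_univ _) fun y _ hy =>
          not_not.mp ((he x y).not.mpr hy.symm)
    _ = B (e x) := by
        rw [← hCB (e x), Finset.sum_eq_single_of_mem x (Finset.mem_univ x)]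
        exact fun x' _ hx' => not_not.mp fun h => hx' (e.injective ((he x' (e x)).mp h))

/-- Compatible atomic (rank-one) non-redundant POVMs are equal up to a
bijective relabeling of outcomes. -/
theorem stmt_16 {n X Y : Type*} [Fintype n] [DecidableEq n]
    [Fintype X] [DecidableEq X] [Fintype Y] [DecidableEq Y]
    (A : X → Matrix n n ℂ) (B : Y → Matrix n n ℂ)
    (hApsd : ∀ x, (A x).PosSemidef) (hAsum : ∑ x, A x = 1)
    (hBpsd : ∀ y, (B y).PosSemidef) (hBsum : ∑ y, B y = 1)
    (hAatom : ∀ x, A x ≠ 0 ∧ (A x).rank ≤ 1)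
    (hBatom : ∀ y, B y ≠ 0 ∧ (B y).rank ≤ 1)
    (hAnr : ∀ x x', x ≠ x' → ∀ c : ℝ, 0 < c → A x ≠ (c : ℂ) • A x')
    (hBnr : ∀ y y', y ≠ y' → ∀ c : ℝ, 0 < c → B y ≠ (c : ℂ) • B y')
    (hcompat : ∃ C : X → Y → Matrix n n ℂ,
      (∀ x y, (C x y).PosSemidef) ∧
      (∀ x, ∑ y, C x y = A x) ∧
      (∀ y, ∑ x, C x y = B y)) :
    Fintype.card X = Fintype.card Y ∧ ∃ e : X ≃ Y, ∀ x, A x = B (e x) :=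
  stmt_16_general A B hAatom hBatom hAnr hBnr hcompat
end
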